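/- For pairwise distinct real numbers λ_1, …, λ_n, the following identity holds for all i, j ∈ {1,…,n}: ∑_{k=1}^n λ_k^{i-1} · (-(1/Δ_j) ∂ρ_{n-k+1}/∂λ_j) = δ_{ij}, where ρ_m = (-1)^m σ_m(λ) and Δ_j = ∏_{k≠j}(λ_j - λ_k). Equivalently, V · W = I where V_{ik} = λ_i^{k-1} and W_{kj} = -(1/Δ_j)∂ρ_{n-k+1}/∂λ_j. -/

import Mathlib

/-- The `i`-th elementary symmetric polynomial `σ_i(λ₁,…,λ_n)`. -/
noncomputable def esymmF (n i : ℕ) (l : Fin n → ℝ) : ℝ :=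
  ∑ s ∈ Finset.powersetCard i Finset.univ, ∏ j ∈ s, l j

/-- `ρ_i = (-1)^i σ_i(λ)`. -/
noncomputable def rho (n i : ℕ) (l : Fin n → ℝ) : ℝ :=
  (-1) ^ i * esymmF n i l

/-- Partial derivative `∂f/∂λ_j` evaluated at `l`. -/
noncomputable def pd (n : ℕ) (f : (Fin n → ℝ) → ℝ) (l : Fin n → ℝ) (j : Fin n) : ℝ :=
  deriv (fun t => f (Function.update l j t)) (l j)

/-- `Δ_j = ∏_{k≠j} (λ_j - λ_k)`. -/
noncomputable def Delta (n : ℕ) (l : Fin n → ℝ) (j : Fin n) : ℝ :=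
  ∏ k ∈ Finset.univ.erase j, (l j - l k)

lemma esymm_update (n m : ℕ) (l : Fin n → ℝ) (j : Fin n) (t : ℝ) :
    esymmF n (m+1) (Function.update l j t)
      = (∑ s ∈ Finset.powersetCard m (Finset.univ.erase j), ∏ k ∈ s, l k) * t
        + ∑ s ∈ (Finset.powersetCard (m+1) (Finset.univ : Finset (Fin n))).filter
            (fun s => j ∉ s), ∏ k ∈ s, l k := by
  rw [esymmF, ← Finset.sum_filter_add_sum_filter_not _ (fun s => j ∈ s)]
  congr 1
  · rw [Finset.sum_mul]
    refine Finset.sum_bij' (fun s _ => s.erase j) (fun s _ => insert j s) ?_ ?_ ?_ ?_ ?_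
    · intro s hs
      simp only [Finset.mem_filter, Finset.mem_powersetCard] at hs
      simp only [Finset.mem_powersetCard]
      constructor
      · intro x hx
        simp only [Finset.mem_erase] at hx ⊢
        exact ⟨hx.1, Finset.mem_univ x⟩
      · rw [Finset.card_erase_of_mem hs.2, hs.1.2]
        rfl
    · intro s hs
      simp only [Finset.mem_powersetCard, Finset.subset_iff, Finset.mem_erase] at hs
      simp only [Finset.mem_filter, Finset.mem_powersetCard]
      have hj : j ∉ s := fun h => ((hs.1 h).1 rfl)
      refine ⟨⟨fun x _ => Finset.mem_univ x, ?_⟩, Finset.mem_insert_self j s⟩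
      rw [Finset.card_insert_of_notMem hj, hs.2]
    · intro s hs
      simp only [Finset.mem_filter] at hs
      exact Finset.insert_erase hs.2
    · intro s hs
      simp only [Finset.mem_powersetCard, Finset.subset_iff, Finset.mem_erase] at hs
      have hj : j ∉ s := fun h => ((hs.1 h).1 rfl)
      exact Finset.erase_insert hj
    · intro s hs
      simp only [Finset.mem_filter] at hs
      rw [← Finset.mul_prod_erase _ _ hs.2, Function.update_self, mul_comm]
      congr 1
      refine Finset.prod_congr rfl fun x hx => ?_
      exact Function.update_of_ne (Finset.mem_erase.1 hx).1 _ _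
  · refine Finset.sum_congr rfl fun s hs => Finset.prod_congr rfl fun x hx => ?_
    simp only [Finset.mem_filter] at hs
    exact Function.update_of_ne (fun h => hs.2 (by rw [← h]; exact hx)) _ _

lemma pd_esymm (n m : ℕ) (l : Fin n → ℝ) (j : Fin n) :
    pd n (esymmF n (m+1)) l j
      = ∑ s ∈ Finset.powersetCard m (Finset.univ.erase j), ∏ k ∈ s, l k := by
  unfold pd
  have h : (fun t => esymmF n (m+1) (Function.update l j t))
      = fun t => (∑ s ∈ Finset.powersetCard m (Finset.univ.erase j), ∏ k ∈ s, l k) * t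
        + ∑ s ∈ (Finset.powersetCard (m+1) (Finset.univ : Finset (Fin n))).filter
            (fun s => j ∉ s), ∏ k ∈ s, l k := funext (esymm_update n m l j)
  rw [h]
  have := (((hasDerivAt_id (l j)).const_mul
    (∑ s ∈ Finset.powersetCard m (Finset.univ.erase j), ∏ k ∈ s, l k)).add_const
    (∑ s ∈ (Finset.powersetCard (m+1) (Finset.univ : Finset (Fin n))).filter
            (fun s => j ∉ s), ∏ k ∈ s, l k)).deriv
  simp only [id_eq, mul_one] at this
  simpa [mul_comm] using this

lemma pd_rho (n m : ℕ) (l : Fin n → ℝ) (j : Fin n) :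
    pd n (rho n (m+1)) l j
      = (-1)^(m+1) * ∑ s ∈ Finset.powersetCard m (Finset.univ.erase j), ∏ k ∈ s, l k := by
  rw [← pd_esymm]
  unfold pd rho
  exact deriv_const_mul_field _

theorem vandermonde_mul_inverse_eq_delta (n : ℕ) (l : Fin n → ℝ)
    (hl : Function.Injective l) (i j : Fin n) :
    ∑ k : Fin n, l i ^ (k : ℕ) * (-(1 / Delta n l j) * pd n (rho n (n - (k : ℕ))) l j)
      = if i = j then 1 else 0 := by
  classical
  have hn : 0 < n := j.pos
  set E := Finset.univ.erase j with hEdef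
  set S : ℕ → ℝ := fun m => ∑ s ∈ Finset.powersetCard m E, ∏ k ∈ s, l k with hS
  have hEcard : E.card = n - 1 := by
    simp [hEdef, Finset.card_erase_of_mem, Finset.card_univ]
  have hΔ : Delta n l j ≠ 0 := by
    rw [Delta]
    refine Finset.prod_ne_zero_iff.2 fun k hk => ?_
    exact sub_ne_zero.2 fun h => (Finset.mem_erase.1 hk).1 (hl h).symm
  have prodP : ∀ x : ℝ, ∏ k ∈ E, (x - l k)
      = ∑ m ∈ Finset.range n, (-1)^m * S m * x^(n-1-m) := by
    intro x
    have h1 : ∀ k ∈ E, x - l k = -l k + x := fun k _ => by ring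
    rw [Finset.prod_congr rfl h1, Finset.prod_add, Finset.sum_powerset,
      hEcard, Nat.sub_add_cancel hn]
    refine Finset.sum_congr rfl fun m _ => ?_
    have step : ∀ t ∈ Finset.powersetCard m E, (∏ k ∈ t, (-l k)) * ∏ _k ∈ E \ t, x
        = (-1)^m * (∏ k ∈ t, l k) * x^(n-1-m) := by
      intro t ht
      have htE := Finset.mem_powersetCard.1 ht
      rw [Finset.prod_const, Finset.card_sdiff_of_subset htE.1, hEcard, htE.2]
      have hneg : ∏ k ∈ t, (-l k) = (-1)^m * ∏ k ∈ t, l k := by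
        rw [← htE.2]
        calc ∏ k ∈ t, (-l k) = ∏ k ∈ t, ((-1) * l k) := by simp
          _ = (∏ _k ∈ t, (-1:ℝ)) * ∏ k ∈ t, l k := Finset.prod_mul_distrib
          _ = (-1)^t.card * ∏ k ∈ t, l k := by rw [Finset.prod_const]
      rw [hneg]
    rw [Finset.sum_congr rfl step, ← Finset.sum_mul, ← Finset.mul_sum, hS]
  have key : ∀ k : Fin n,
      l i ^ (k:ℕ) * (-(1 / Delta n l j) * pd n (rho n (n - (k:ℕ))) l j)
      = (1/Delta n l j) * ((-1)^(n-1-(k:ℕ)) * S (n-1-(k:ℕ)) * l i ^ (k:ℕ)) := by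
    intro k
    have hk : (k:ℕ) < n := k.isLt
    have h1 : n - (k:ℕ) = (n - 1 - (k:ℕ)) + 1 := by omega
    rw [h1, pd_rho, pow_succ]
    rw [hS]
    ring
  rw [Finset.sum_congr rfl (fun k _ => key k), ← Finset.mul_sum]
  have hmain : ∑ k : Fin n, (-1:ℝ)^(n-1-(k:ℕ)) * S (n-1-(k:ℕ)) * l i ^ (k:ℕ)
      = ∏ k ∈ E, (l i - l k) := by
    rw [Fin.sum_univ_eq_sum_range (fun k => (-1:ℝ)^(n-1-k) * S (n-1-k) * l i ^ k),
      prodP (l i), ← Finset.sum_range_reflect (fun m => (-1:ℝ)^m * S m * l i ^ (n-1-m)) n]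
    refine Finset.sum_congr rfl fun k hk => ?_
    have h2 : n - 1 - (n - 1 - k) = k := by
      have := Finset.mem_range.1 hk; omega
    simp only [h2]
  rw [hmain]
  by_cases hij : i = j
  · subst hij
    rw [if_pos rfl, show ∏ k ∈ E, (l i - l k) = Delta n l i from rfl]
    exact one_div_mul_cancel hΔ
  · rw [if_neg hij]
    have hiE : i ∈ E := Finset.mem_erase.2 ⟨hij, Finset.mem_univ i⟩
    rw [Finset.prod_eq_zero hiE (by ring), mul_zero]
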